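/- arXiv:2011.05772 — 2 statements merged into one kernel-verified Lean document; each statement's English description precedes it below -/
import Mathlib

section
/- For every vertex v of G and the copy v in 𝒢(v0) (first copy), the distance from v0 to v in 𝒢(v0) equals the distance from v0 to v in G. -/
open SimpleGraph Sum

variable {V : Type*}

/-- The bipartite double construction `𝒢(v0)` of `G` with respect to `v0`: two copies of `V`;
every non-cross edge of `G` is kept inside each copy, and every cross edge `{u,w}`
(i.e. `d(v0,u) = d(v0,w)`) is replaced by the two edges `{u,w′}` and `{u′,w}` between the copies. -/
def doubleCover (G : SimpleGraph V) (v0 : V) : SimpleGraph (V ⊕ V) where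
  Adj x y :=
    match x, y with
    | inl u, inl w => G.Adj u w ∧ G.dist v0 u ≠ G.dist v0 w
    | inr u, inr w => G.Adj u w ∧ G.dist v0 u ≠ G.dist v0 w
    | inl u, inr w => G.Adj u w ∧ G.dist v0 u = G.dist v0 w
    | inr u, inl w => G.Adj u w ∧ G.dist v0 u = G.dist v0 w
  symm := by
    constructor
    rintro (u|u) (w|w) ⟨h1, h2⟩ <;> exact ⟨h1.symm, by omega⟩
  loopless := by
    constructor
    rintro (u|u) ⟨h, _⟩ <;> exact G.irrefl h

/-
The projection `𝒢(v0) → G` forgetting the copy is a graph homomorphism, so distances can only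
grow under it. Conversely, along a shortest path from `v0` the distance to `v0` increases by one at
every step, so no edge of it is a cross edge and the whole path lifts into the first copy.
-/

namespace SimpleGraph

lemma Reachable.dist_map_le {W : Type*} {G : SimpleGraph V} {H : SimpleGraph W} (f : G →g H)
    {u v : V} (h : G.Reachable u v) : H.dist (f u) (f v) ≤ G.dist u v := by
  obtain ⟨p, hp⟩ := h.exists_walk_length_eq_dist
  calc H.dist (f u) (f v) ≤ (p.map f).length := dist_le _
    _ = G.dist u v := by rw [Walk.length_map, hp]

lemma exists_adj_dist_eq_of_dist_eq_succ {G : SimpleGraph V} {v0 v : V} {n : ℕ}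
    (h : G.dist v0 v = n + 1) : ∃ u, G.Adj u v ∧ G.dist v0 u = n := by
  obtain ⟨p, hp⟩ := exists_walk_of_dist_ne_zero (h ▸ n.succ_ne_zero : G.dist v0 v ≠ 0)
  cases hpr : p.reverse with
  | nil => simp at h
  | @cons _ u _ hvu q =>
    have hq : q.length = n := by simpa [hp, h] using (congrArg Walk.length hpr).symm
    have hle : G.dist v0 u ≤ n := by simpa [hq] using dist_le q.reverse
    refine ⟨u, hvu.symm, ?_⟩
    rcases hvu.symm.diff_dist_adj (u := v0) with _ | _ | _ <;> omega

end SimpleGraph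

def doubleCoverProj (G : SimpleGraph V) (v0 : V) : doubleCover G v0 →g G where
  toFun := Sum.elim id id
  map_rel' := by
    rintro (u|u) (w|w) ⟨h, _⟩ <;> exact h

lemma SimpleGraph.Reachable.exists_doubleCover_walk_inl {G : SimpleGraph V} {v0 v : V}
    (h : G.Reachable v0 v) :
    ∃ q : (doubleCover G v0).Walk (inl v0) (inl v), q.length = G.dist v0 v := by
  generalize hn : G.dist v0 v = n
  induction n generalizing v with
  | zero =>
    obtain rfl := h.dist_eq_zero_iff.mp hn
    exact ⟨.nil, rfl⟩
  | succ n ih =>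
    obtain ⟨u, huv, hu⟩ := exists_adj_dist_eq_of_dist_eq_succ hn
    obtain ⟨q, hq⟩ := ih (h.trans huv.symm.reachable) hu
    have hadj : (doubleCover G v0).Adj (inl u) (inl v) := ⟨huv, by omega⟩
    exact ⟨q.concat hadj, by rw [Walk.length_concat, hq]⟩

theorem doubleCover_dist_first_copy_general (G : SimpleGraph V)
    (v0 v : V) :
    (doubleCover G v0).dist (inl v0) (inl v) = G.dist v0 v := by
  by_cases h : G.Reachable v0 v
  · obtain ⟨q, hq⟩ := h.exists_doubleCover_walk_inl
    exact le_antisymm (hq ▸ dist_le q) (q.reachable.dist_map_le (doubleCoverProj G v0))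
  · have h' : ¬(doubleCover G v0).Reachable (inl v0) (inl v) :=
      fun hr => h (hr.map (doubleCoverProj G v0))
    rw [dist_eq_zero_of_not_reachable h, dist_eq_zero_of_not_reachable h']

/-- The distance from `v0` to the first copy of any vertex `v` in `𝒢(v0)` equals the
distance from `v0` to `v` in `G`. -/
theorem doubleCover_dist_first_copy [Fintype V] (G : SimpleGraph V) (hG : G.Connected)
    (v0 v : V) :
    (doubleCover G v0).dist (inl v0) (inl v) = G.dist v0 v :=
  doubleCover_dist_first_copy_general G v0 v
end

section
/- For a finite connected non-bipartite graph G and any vertex v0, the bipartite double construction 𝒢(v0) (cross edges w.r.t. v0 rerouted between the two copies) is connected. -/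
open SimpleGraph Sum

variable {V : Type*}

/-!
A shortest path from `v0` in `G` never uses a cross edge, so it lifts to each copy of `V`; hence
`inl v0` reaches all of `inl '' V` and `inr v0` all of `inr '' V`. If `G` had no cross edge, the
parity of `G.dist v0` would be a proper 2-colouring; a cross edge `{u, w}` gives the edge
`{inl u, inr w}` joining the two copies.
-/

namespace SimpleGraph

variable {G : SimpleGraph V}

theorem Reachable.exists_adj_dist_eq_of_dist_eq_add_one {v0 u : V} {n : ℕ}
    (hu : G.Reachable v0 u) (hdist : G.dist v0 u = n + 1) :
    ∃ w, G.Adj w u ∧ G.dist v0 w = n := by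
  obtain ⟨p, hp⟩ := hu.symm.exists_walk_length_eq_dist
  cases p with
  | nil => simp at hdist
  | @cons _ w _ hadj q =>
    refine ⟨w, hadj.symm, ?_⟩
    have hle : G.dist w v0 ≤ q.length := dist_le q
    have hdiff := hadj.diff_dist_adj (u := v0)
    rw [Walk.length_cons, dist_comm] at hp
    rw [dist_comm] at hle
    omega

theorem colorable_two_of_forall_adj_dist_ne (v0 : V)
    (h : ∀ u w, G.Adj u w → G.dist v0 u ≠ G.dist v0 w) : G.Colorable 2 :=
  ⟨Coloring.mk (fun u => ⟨G.dist v0 u % 2, Nat.mod_lt _ two_pos⟩) fun {u w} hadj => by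
    have hne := h u w hadj
    have hdiff := hadj.diff_dist_adj (u := v0)
    simp only [ne_eq, Fin.mk.injEq]
    omega⟩

theorem exists_adj_dist_eq_of_not_colorable_two (hG : ¬ G.Colorable 2) (v0 : V) :
    ∃ u w, G.Adj u w ∧ G.dist v0 u = G.dist v0 w := by
  by_contra! h
  exact hG (colorable_two_of_forall_adj_dist_ne v0 h)

end SimpleGraph

section doubleCover

variable {G : SimpleGraph V} {v0 u : V}

def doubleCover.swapIso (G : SimpleGraph V) (v0 : V) : doubleCover G v0 ≃g doubleCover G v0 where
  toEquiv := Equiv.sumComm V V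
  map_rel_iff' := by rintro (u|u) (w|w) <;> exact Iff.rfl

theorem doubleCover_reachable_inl_inl (hu : G.Reachable v0 u) :
    (doubleCover G v0).Reachable (inl v0) (inl u) := by
  induction hdist : G.dist v0 u generalizing u with
  | zero =>
    rw [hu.dist_eq_zero_iff] at hdist
    rw [hdist]
  | succ n ih =>
    obtain ⟨w, hadj, hw⟩ := hu.exists_adj_dist_eq_of_dist_eq_add_one hdist
    have hstep : (doubleCover G v0).Adj (inl w) (inl u) := ⟨hadj, by omega⟩
    exact (ih (hu.trans hadj.symm.reachable) hw).trans hstep.reachable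

theorem doubleCover_reachable_inr_inr (hu : G.Reachable v0 u) :
    (doubleCover G v0).Reachable (inr v0) (inr u) :=
  (doubleCover_reachable_inl_inl hu).map (doubleCover.swapIso G v0).toHom

theorem doubleCover_reachable_inl_inr_of_adj {w : V} (hu : G.Reachable v0 u)
    (hadj : G.Adj u w) (hdist : G.dist v0 u = G.dist v0 w) :
    (doubleCover G v0).Reachable (inl v0) (inr v0) :=
  have hcross : (doubleCover G v0).Adj (inl u) (inr w) := ⟨hadj, hdist⟩
  ((doubleCover_reachable_inl_inl hu).trans hcross.reachable).trans
    (doubleCover_reachable_inr_inr (hu.trans hadj.reachable)).symm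

end doubleCover

theorem doubleCover_connected_of_not_bipartite_general (G : SimpleGraph V)
    (hG : G.Connected) (hnb : ¬ G.Colorable 2) (v0 : V) :
    (doubleCover G v0).Connected := by
  obtain ⟨u, w, hadj, hdist⟩ := exists_adj_dist_eq_of_not_colorable_two hnb v0
  have hbridge := doubleCover_reachable_inl_inr_of_adj (hG v0 u) hadj hdist
  refine (connected_iff_exists_forall_reachable _).mpr ⟨inl v0, ?_⟩
  rintro (x | x)
  · exact doubleCover_reachable_inl_inl (hG v0 x)
  · exact hbridge.trans (doubleCover_reachable_inr_inr (hG v0 x))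

/-- For a finite connected non-bipartite graph `G` and any vertex `v0`, the bipartite
double construction `𝒢(v0)` is connected. -/
theorem doubleCover_connected_of_not_bipartite [Fintype V] (G : SimpleGraph V)
    (hG : G.Connected) (hnb : ¬ G.Colorable 2) (v0 : V) :
    (doubleCover G v0).Connected :=
  doubleCover_connected_of_not_bipartite_general G hG hnb v0
end
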